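/- Fix c ∈ (0,1] and n ≥ 1. The function R̃_n(x) = -ψ(n+c-x) - ψ(n+x) - 2γ is strictly decreasing on (0, c/2) and strictly increasing on (c/2, c], and satisfies R̃_n(x) < 0 for all x ∈ (0, c]. -/

import Mathlib

/-
`log ∘ Gamma` is convex with `log Γ(x + 1) = log Γ(x) + log x`, so `ψ(x + 1) = ψ(x) + 1/x` and
`log x ≤ ψ(x + 1) ≤ log (x + 1)`; in particular `ψ` is increasing and its increments
`ψ(x + t) - ψ(x)` vanish at infinity. Telescoping the recurrence then gives
`ψ(x + t) - ψ(x) = ∑ⱼ (1/(x + j) - 1/(x + j + t))`, whose terms decrease strictly in `x`.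
So `ψ` has strictly decreasing increments, which makes `x ↦ ψ(x) + ψ(s - x)` strictly increasing
for `x < s/2`. With `s = 2n + c` this is `-R̃ₙ(x - n) - 2γ`, and its symmetry `x ↦ s - x` gives
the two monotonicity claims. Negativity follows from `ψ(1) = -γ` and `n + x > 1`, `n + c - x ≥ 1`.
-/

noncomputable def digamma (x : ℝ) : ℝ := deriv (fun y : ℝ => Real.log (Real.Gamma y)) x

noncomputable def Bc (c x : ℝ) : ℝ := Real.Gamma x * Real.Gamma (c - x) / Real.Gamma c

noncomputable def Rc (c x : ℝ) : ℝ :=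
  -digamma x - digamma (c - x) - 2 * Real.eulerMascheroniConstant

noncomputable def Rtilde (c : ℝ) (n : ℕ) (x : ℝ) : ℝ :=
  -digamma (n + c - x) - digamma (n + x) - 2 * Real.eulerMascheroniConstant

open Real Set Filter Topology Finset

lemma ne_neg_natCast_of_pos {x : ℝ} (hx : 0 < x) (m : ℕ) : x ≠ -m := by
  have : (0 : ℝ) ≤ m := m.cast_nonneg
  linarith

lemma differentiableAt_log_Gamma {x : ℝ} (hx : 0 < x) :
    DifferentiableAt ℝ (fun y : ℝ => log (Gamma y)) x :=
  (differentiableAt_Gamma (ne_neg_natCast_of_pos hx)).log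
    (Gamma_ne_zero (ne_neg_natCast_of_pos hx))

lemma log_Gamma_add_one {x : ℝ} (hx : 0 < x) :
    log (Gamma (x + 1)) = log (Gamma x) + log x := by
  rw [Gamma_add_one hx.ne', log_mul hx.ne' (Gamma_pos_of_pos hx).ne', add_comm]

lemma digamma_one : digamma 1 = -eulerMascheroniConstant := by
  have h := hasDerivAt_Gamma_one.log (by simp)
  rw [digamma, h.deriv, Gamma_one, div_one]

lemma digamma_add_one {x : ℝ} (hx : 0 < x) : digamma (x + 1) = digamma x + x⁻¹ := by
  unfold digamma
  rw [← deriv_comp_add_const, ← deriv_log,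
    ← deriv_add (differentiableAt_log_Gamma hx) (differentiableAt_log hx.ne')]
  apply EventuallyEq.deriv_eq
  filter_upwards [eventually_gt_nhds hx] with y hy using log_Gamma_add_one hy

lemma digamma_add_nat {x : ℝ} (hx : 0 < x) (m : ℕ) :
    digamma (x + m) = digamma x + ∑ j ∈ range m, (x + j)⁻¹ := by
  induction m with
  | zero => simp
  | succ k ih =>
    rw [Nat.cast_succ, ← add_assoc, digamma_add_one (by positivity), ih, sum_range_succ,
      add_assoc]

lemma monotoneOn_digamma : MonotoneOn digamma (Ioi 0) := by
  intro a ha b hb hab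
  rcases hab.eq_or_lt with rfl | hlt
  · rfl
  · exact (convexOn_log_Gamma.deriv_le_slope ha hb hlt (differentiableAt_log_Gamma ha)).trans
      (convexOn_log_Gamma.slope_le_deriv ha hb hlt (differentiableAt_log_Gamma hb))

lemma digamma_le_log {x : ℝ} (hx : 0 < x) : digamma x ≤ log x := by
  refine (convexOn_log_Gamma.deriv_le_slope hx (mem_Ioi.2 (by linarith)) (lt_add_one x)
    (differentiableAt_log_Gamma hx)).trans_eq ?_
  rw [slope_def_field, Function.comp_apply, Function.comp_apply, log_Gamma_add_one hx]
  ring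

lemma log_le_digamma_add_one {x : ℝ} (hx : 0 < x) : log x ≤ digamma (x + 1) := by
  refine le_of_eq_of_le ?_ (convexOn_log_Gamma.slope_le_deriv hx (mem_Ioi.2 (by linarith))
    (lt_add_one x) (differentiableAt_log_Gamma (by linarith)))
  rw [slope_def_field, Function.comp_apply, Function.comp_apply, log_Gamma_add_one hx]
  ring

lemma tendsto_digamma_add_sub_digamma {t : ℝ} (ht : 0 ≤ t) :
    Tendsto (fun x => digamma (x + t) - digamma x) atTop (𝓝 0) := by
  have hbound : Tendsto (fun x : ℝ => (t + 1) / (x - 1)) atTop (𝓝 0) :=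
    tendsto_const_nhds.div_atTop (tendsto_atTop_add_const_right _ _ tendsto_id)
  refine squeeze_zero' ?_ ?_ hbound
  · filter_upwards [eventually_gt_atTop 0] with x hx
    exact sub_nonneg.2 (monotoneOn_digamma hx (mem_Ioi.2 (by linarith)) (by linarith))
  · filter_upwards [eventually_gt_atTop 1] with x hx
    have hx1 : 0 < x - 1 := by linarith
    have hupper := digamma_le_log (x := x + t) (by linarith)
    have hlower := log_le_digamma_add_one hx1
    rw [sub_add_cancel] at hlower
    calc digamma (x + t) - digamma x ≤ log ((x + t) / (x - 1)) := by
          rw [log_div (by linarith) hx1.ne']; linarith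
      _ ≤ (x + t) / (x - 1) - 1 := log_le_sub_one_of_pos (by positivity)
      _ = (t + 1) / (x - 1) := by field_simp; ring

lemma hasSum_digamma_add_sub_digamma {x t : ℝ} (hx : 0 < x) (ht : 0 ≤ t) :
    HasSum (fun j : ℕ => (x + j)⁻¹ - (x + j + t)⁻¹) (digamma (x + t) - digamma x) := by
  have hterm (j : ℕ) : 0 ≤ (x + j)⁻¹ - (x + j + t)⁻¹ :=
    sub_nonneg.2 (inv_anti₀ (by positivity) (by linarith))
  rw [hasSum_iff_tendsto_nat_of_nonneg hterm]
  have htail : Tendsto (fun m : ℕ => digamma (x + m + t) - digamma (x + m)) atTop (𝓝 0) :=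
    (tendsto_digamma_add_sub_digamma ht).comp
      (tendsto_atTop_add_const_left _ _ tendsto_natCast_atTop_atTop)
  convert (tendsto_const_nhds (x := digamma (x + t) - digamma x)).sub htail using 1
  · ext m
    rw [sum_sub_distrib, add_right_comm, digamma_add_nat hx, digamma_add_nat (by linarith)]
    simp only [add_right_comm x t]
    ring
  · simp

lemma strictMonoOn_digamma : StrictMonoOn digamma (Ioi 0) := by
  intro a (ha : 0 < a) b _ hab
  have hsum := hasSum_digamma_add_sub_digamma ha (sub_pos.2 hab).le
  rw [add_sub_cancel] at hsum
  refine sub_pos.1 (hasSum_lt (f := 0) (i := 0) (fun j => ?_) ?_ hasSum_zero hsum)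
  · exact sub_nonneg.2 (inv_anti₀ (by positivity) (by linarith))
  · simpa using inv_strictAnti₀ ha (by linarith)

lemma strictAntiOn_digamma_add_sub_digamma {t : ℝ} (ht : 0 < t) :
    StrictAntiOn (fun x => digamma (x + t) - digamma x) (Ioi 0) := by
  intro a (ha : 0 < a) b (hb : 0 < b) hab
  have hterm_lt {u v : ℝ} (hu : 0 < u) (huv : u < v) :
      v⁻¹ - (v + t)⁻¹ < u⁻¹ - (u + t)⁻¹ := by
    have hv : 0 < v := hu.trans huv
    rw [inv_sub_inv hv.ne' (by positivity), inv_sub_inv hu.ne' (by positivity),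
      add_sub_cancel_left, add_sub_cancel_left]
    exact div_lt_div_of_pos_left ht (by positivity) (by nlinarith)
  refine hasSum_lt (i := 0) (fun j => ?_) ?_ (hasSum_digamma_add_sub_digamma hb ht.le)
    (hasSum_digamma_add_sub_digamma ha ht.le)
  · exact (hterm_lt (by positivity) (by simpa using hab)).le
  · simpa using hterm_lt ha hab

lemma digamma_add_digamma_sub_lt {s x y : ℝ} (hx : 0 < x) (hxy : x < y) (hys : x + y < s) :
    digamma x + digamma (s - x) < digamma y + digamma (s - y) := by
  have h := strictAntiOn_digamma_add_sub_digamma (sub_pos.2 hxy) (mem_Ioi.2 hx)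
    (mem_Ioi.2 (by linarith : 0 < s - y)) (by linarith)
  simp only [add_sub_cancel, sub_add_sub_cancel] at h
  linarith

theorem stmt_14_general (c : ℝ) (n : ℕ) (hn : 1 ≤ n) :
    StrictAntiOn (Rtilde c n) (Set.Ioo 0 (c / 2)) ∧
      StrictMonoOn (Rtilde c n) (Set.Ioc (c / 2) c) ∧
      ∀ x ∈ Set.Ioc 0 c, Rtilde c n x < 0 := by
  have hn1 : (1 : ℝ) ≤ n := by exact_mod_cast hn
  refine ⟨?_, ?_, ?_⟩
  · rintro x ⟨hx0, -⟩ y ⟨-, hyc⟩ hxy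
    have h := digamma_add_digamma_sub_lt (s := 2 * n + c) (x := n + x) (y := n + y)
      (by linarith) (by linarith) (by linarith)
    rw [show 2 * n + c - (n + x) = n + c - x by ring,
      show 2 * n + c - (n + y) = n + c - y by ring] at h
    simp only [Rtilde]
    linarith
  · rintro x ⟨hcx, -⟩ y ⟨-, hyc⟩ hxy
    have h := digamma_add_digamma_sub_lt (s := 2 * n + c) (x := n + c - y) (y := n + c - x)
      (by linarith) (by linarith) (by linarith)
    rw [show 2 * n + c - (n + c - y) = n + y by ring,
      show 2 * n + c - (n + c - x) = n + x by ring] at h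
    simp only [Rtilde]
    linarith
  · rintro x ⟨hx0, hxc⟩
    have h1 : digamma 1 < digamma (n + x) :=
      strictMonoOn_digamma (mem_Ioi.2 one_pos) (mem_Ioi.2 (by linarith)) (by linarith)
    have h2 : digamma 1 ≤ digamma (n + c - x) :=
      monotoneOn_digamma (mem_Ioi.2 one_pos) (mem_Ioi.2 (by linarith)) (by linarith)
    rw [digamma_one] at h1 h2
    simp only [Rtilde]
    linarith

theorem stmt_14 (c : ℝ) (hc : c ∈ Set.Ioc (0:ℝ) 1) (n : ℕ) (hn : 1 ≤ n) :
    StrictAntiOn (Rtilde c n) (Set.Ioo 0 (c / 2)) ∧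
      StrictMonoOn (Rtilde c n) (Set.Ioc (c / 2) c) ∧
      ∀ x ∈ Set.Ioc 0 c, Rtilde c n x < 0 :=
  stmt_14_general c n hn
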